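/- Let Γ be a connected G-graph with finite edge stabilizers, and suppose Γ is fine at a vertex u. Then for every vertex v of Γ, either the subgroup G_u ∩ G_v is finite or u = v. -/

import Mathlib

open SimpleGraph
/-- The graph `Γ` with the vertex `v` deleted (kept as an isolated vertex). -/
def deleteVert {V : Type*} (Γ : SimpleGraph V) (v : V) : SimpleGraph V where
  Adj x y := Γ.Adj x y ∧ x ≠ v ∧ y ≠ v
  symm := ⟨fun x y ⟨h, hx, hy⟩ => ⟨h.symm, hy, hx⟩⟩
  loopless := ⟨fun x ⟨h, _, _⟩ => Γ.loopless.irrefl x h⟩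

/-- The angle metric `∠_v(x,y)`: length of a shortest path from `x` to `y` in `Γ - v`,
with value `∞` if there is no such path. -/
noncomputable def angle {V : Type*} (Γ : SimpleGraph V) (v x y : V) : ℕ∞ :=
  (deleteVert Γ v).edist x y

/-- `Γ` is fine at `v`: every ball of finite radius in `(T_vΓ, ∠_v)` is finite. -/
def FineAt {V : Type*} (Γ : SimpleGraph V) (v : V) : Prop :=
  ∀ x ∈ Γ.neighborSet v, ∀ n : ℕ,
    {y ∈ Γ.neighborSet v | angle Γ v x y ≤ (n : ℕ∞)}.Finite

/-- The set `uv→(k)_Γ` of vertices `w` adjacent to `u` that belong to some escaping path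
from `u` to `v` of length at most `k`.  An escaping path from `u` to `v` is an edge-path
`[u, u₁, …, uₙ]` with `v = uᵢ` for some `i ≥ 1` and `uᵢ ≠ u` for all `i ≥ 1`. -/
def escSet {V : Type*} (Γ : SimpleGraph V) (u v : V) (k : ℕ) : Set V :=
  {w | w ∈ Γ.neighborSet u ∧ ∃ (x : V) (p : Γ.Walk u x),
      p.length ≤ k ∧ v ∈ p.support.tail ∧ u ∉ p.support.tail ∧ w ∈ p.support}

/-!
Let `u ≠ v`. Choose a neighbour `w` of `u` and a walk `q` from `w` to `v` avoiding `u`. For `g`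
fixing both `u` and `v`, the walk `q` followed by the reverse of `g • q` joins `w` to `g • w` in
`Γ - u`, so the orbit of `w` under `G_u ∩ G_v` lies in the `∠_u`-ball of radius `2 |q|` about `w`,
which is finite by fineness. The elements of `G_u` sending `w` to a given vertex form a coset of
`G_u ∩ G_w`, which lies in the stabiliser of the edge `{u, w}` and so is finite.
-/

section Action

variable {G V : Type*} [Group G] [MulAction G V]

lemma finite_setOf_smul_eq_and_smul_eq {u w : V}
    (hstab : {g : G | g • u = u ∧ g • w = w}.Finite) (y : V) :
    {g : G | g • u = u ∧ g • w = y}.Finite := by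
  rcases Set.eq_empty_or_nonempty {g : G | g • u = u ∧ g • w = y} with hempty | ⟨g₀, hg₀u, hg₀w⟩
  · simp [hempty]
  refine (hstab.image (g₀ * ·)).subset fun g ⟨hgu, hgw⟩ => ⟨g₀⁻¹ * g, ⟨?_, ?_⟩, by group⟩
  · rw [mul_smul, hgu, inv_smul_eq_iff, hg₀u]
  · rw [mul_smul, hgw, ← hg₀w, inv_smul_smul]

lemma Set.Finite.of_finite_image_smul {S : Set G} {u w : V} (hSu : ∀ g ∈ S, g • u = u)
    (himage : ((· • w) '' S).Finite) (hstab : {g : G | g • u = u ∧ g • w = w}.Finite) :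
    S.Finite :=
  (himage.biUnion fun y _ => finite_setOf_smul_eq_and_smul_eq hstab y).subset
    fun g hg => Set.mem_biUnion ⟨g, hg, rfl⟩ ⟨hSu g hg, rfl⟩

end Action

section Graph

variable {V : Type*} {Γ : SimpleGraph V}

lemma angle_le_length {u a b : V} (q : Γ.Walk a b) (hq : u ∉ q.support) :
    angle Γ u a b ≤ q.length := by
  have hedges : ∀ e ∈ q.edges, e ∈ (deleteVert Γ u).edgeSet := by
    intro e he
    induction e using Sym2.ind with
    | _ x y =>
      exact ⟨q.edges_subset_edgeSet he, (q.fst_mem_support_of_mem_edges he).ne_of_notMem hq,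
        (q.snd_mem_support_of_mem_edges he).ne_of_notMem hq⟩
  simpa [angle] using (q.transfer _ hedges).edist_le

lemma SimpleGraph.Reachable.exists_adj_walk_notMem_support {u v : V} (h : Γ.Reachable u v) (huv : u ≠ v) :
    ∃ w, Γ.Adj u w ∧ ∃ q : Γ.Walk w v, u ∉ q.support := by
  classical
  obtain ⟨p, hp⟩ := h.some.toPath
  cases p with
  | nil => exact absurd rfl huv
  | cons hadj q => exact ⟨_, hadj, q, (Walk.cons_isPath_iff _ _).mp hp |>.2⟩

lemma angle_smul_le {G : Type*} [Group G] [MulAction G V] {g : G}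
    (hg : ∀ x y : V, Γ.Adj x y → Γ.Adj (g • x) (g • y)) {u v w : V} (hgu : g • u = u)
    (hgv : g • v = v) (q : Γ.Walk w v) (hq : u ∉ q.support) :
    angle Γ u w (g • w) ≤ (q.length + q.length : ℕ) := by
  let φ : Γ →g Γ := ⟨(g • ·), hg _ _⟩
  let gq : Γ.Walk (g • w) v := (q.map φ).copy rfl hgv
  have hgq : u ∉ gq.support := by
    rw [Walk.support_copy, Walk.support_map, List.mem_map]
    rintro ⟨y, hy, hyu⟩
    rw [← hgu] at hyu
    exact hq ((smul_left_cancel_iff g).mp hyu ▸ hy)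
  have hlen : (q.append gq.reverse).length = q.length + q.length := by simp [gq]
  rw [← hlen]
  refine angle_le_length _ ?_
  rw [Walk.mem_support_append_iff, Walk.support_reverse, List.mem_reverse]
  exact fun h => h.elim hq hgq

end Graph

theorem statement3 {V G : Type*} [Group G] [MulAction G V] (Γ : SimpleGraph V)
    (hconn : Γ.Connected)
    (hact : ∀ (g : G) (x y : V), Γ.Adj x y → Γ.Adj (g • x) (g • y))
    (hedge : ∀ x y : V, Γ.Adj x y →
      ({g : G | (g • x = x ∧ g • y = y) ∨ (g • x = y ∧ g • y = x)} : Set G).Finite)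
    (u : V) (hfine : FineAt Γ u) :
    ∀ v : V, ({g : G | g • u = u ∧ g • v = v} : Set G).Finite ∨ u = v := by
  intro v
  refine or_iff_not_imp_right.mpr fun huv => ?_
  obtain ⟨w, huw, q, hq⟩ := (hconn.preconnected u v).exists_adj_walk_notMem_support huv
  refine Set.Finite.of_finite_image_smul (w := w) (fun g hg => hg.1) ?_
    ((hedge u w huw).subset fun g hg => Or.inl hg)
  refine (hfine w huw (q.length + q.length)).subset ?_
  rintro _ ⟨g, ⟨hgu, hgv⟩, rfl⟩
  exact ⟨hgu ▸ hact g u w huw, angle_smul_le (hact g) hgu hgv q hq⟩
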